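/- Let n ≥ 2. The decoding map v ↦ G(v) is injective on the set of tree representations on {1,…,n}: if u and v are tree representations on {1,…,n} with u ≠ v, then the graphs G(u) and G(v) have different edge sets. -/

import Mathlib

/-- 0-indexed position of the first occurrence of `x` in `v`. -/
def firstOcc (v : List ℕ) (x : ℕ) : ℕ := v.idxOf x

/-- 0-indexed position of the second (= last, when `x` occurs exactly twice)
occurrence of `x` in `v`. -/
def secondOcc (v : List ℕ) (x : ℕ) : ℕ := v.length - 1 - v.reverse.idxOf x

/-- `v` is a tree representation on `{1,…,n}`: it has length `2n`, entries in
`{1,…,n}`, every `i ∈ {1,…,n}` occurs exactly twice, the first entry is `1`,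
for every `i ∈ {2,…,n}` the first occurrence of `i` appears strictly before the
second occurrence of `i-1`, and the second occurrence of `i` appears strictly
after the second occurrence of `i-1`. -/
def IsTreeRep (n : ℕ) (v : List ℕ) : Prop :=
  v.length = 2 * n ∧
  (∀ x ∈ v, 1 ≤ x ∧ x ≤ n) ∧
  (∀ i, 1 ≤ i → i ≤ n → v.count i = 2) ∧
  v.getD 0 0 = 1 ∧
  (∀ i, 2 ≤ i → i ≤ n → firstOcc v i < secondOcc v (i - 1)) ∧
  (∀ i, 2 ≤ i → i ≤ n → secondOcc v (i - 1) < secondOcc v i)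

/-- `v_j` (0-indexed) is the first occurrence of its value in `v`. -/
def isFirstAt (v : List ℕ) (j : ℕ) : Bool := v.idxOf (v.getD j 0) == j

/-- The edge produced by step `j` (0-indexed, corresponding to the pair of
consecutive entries `v_j, v_{j+1}`) of the decoding algorithm: writing `a, b`
for the values of these two entries, it is `{n+a, n+b}` if both are first
occurrences, `{n+a, b}` if only the first is, `{n+v_{j'}, n+b}` (where `j'` is
the smallest index `> j+1` whose entry is a second occurrence) if only the
second is, and `{n+b, b}` if both are second occurrences. -/
noncomputable def decodeEdge (n : ℕ) (v : List ℕ) (j : ℕ) : Sym2 ℕ :=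
  let a := v.getD j 0
  let b := v.getD (j + 1) 0
  if isFirstAt v j then
    if isFirstAt v (j + 1) then s(n + a, n + b) else s(n + a, b)
  else
    if isFirstAt v (j + 1) then
      s(n + v.getD (sInf {k | j + 1 < k ∧ k < v.length ∧ isFirstAt v k = false}) 0, n + b)
    else s(n + b, b)

/-- The edge set of the graph `G(v)` produced by the decoding algorithm. -/
noncomputable def decodeEdges (n : ℕ) (v : List ℕ) : Finset (Sym2 ℕ) :=
  (Finset.range (2 * n - 1)).image (decodeEdge n v)

/-- The graph `G(v)` produced by the decoding algorithm (as a simple graph on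
`ℕ`; its relevant vertices are `{1,…,2n}`). -/
noncomputable def decodeGraph (n : ℕ) (v : List ℕ) : SimpleGraph ℕ :=
  SimpleGraph.fromEdgeSet ↑(decodeEdges n v)

/-!
Write `x(k) = vertexAt n v k` for the vertex attached to position `k` of a tree representation
`v`: `n + v_k` at a first occurrence and `v_k` at a second one, and let `π = partnerVertex n`, so
`π x = n + x + 1` for `x ≤ n` and `π x = x` otherwise. Since the second occurrences appear in the
order `1, …, n`, every edge of `G(v)` is `{π x(j), x(j + 1)}`; moreover `k ↦ x(k)` is injective
and, by the defining condition on first occurrences, `x(m) ≠ π x(k)` whenever `k < m`.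

Let `p` be the last position where `u` and `v` differ. Whether a position holds a first occurrence
is decided by the entries after it, so `u` and `v` attach the same vertices to all positions after
`p`. Hence `π x_u(p) ≠ π x_v(p)`: otherwise, say, `x_u(p) = c ≤ n` and `x_v(p) = n + c + 1`, and
the second occurrence of `c` in `v` would lie after `p`, giving `u` a third occurrence of `c`. If
the edge `{π x_v(p), x_v(p + 1)}` of `G(v)` were an edge `{π x_u(j), x_u(j + 1)}` of `G(u)`, then
either `j = p`, or `j > p` and `x_v(j + 1) = π x_v(p)`; both are impossible.
-/

open Finset

theorem count_eq_card_filter_getD (v : List ℕ) (x : ℕ) :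
    v.count x = #{k ∈ range v.length | v.getD k 0 = x} := by
  calc v.count x = #{i : Fin v.length | v[i] = x} :=
        (Fin.card_filter_univ_eq_vector_get_eq_count x ⟨v, rfl⟩).symm
    _ = #{k ∈ univ.map Fin.valEmbedding | v.getD k 0 = x} := by
        rw [filter_map, card_map]; congr 2; ext i; simp
    _ = _ := by rw [Fin.map_valEmbedding_univ, Nat.Iio_eq_range]

theorem firstOcc_le {v : List ℕ} {x k : ℕ} (hk : k < v.length) (h : v.getD k 0 = x) :
    firstOcc v x ≤ k := by
  by_contra! hlt
  have := List.not_of_lt_findIdx hlt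
  simp_all

theorem le_secondOcc {v : List ℕ} {x k : ℕ} (hk : k < v.length) (h : v.getD k 0 = x) :
    k ≤ secondOcc v x := by
  have : firstOcc v.reverse x ≤ v.length - 1 - k :=
    firstOcc_le (by simp only [List.length_reverse]; omega)
      (by rw [List.getD_reverse _ (by omega)]; grind)
  unfold secondOcc; unfold firstOcc at this; omega

theorem firstOcc_lt_length {v : List ℕ} {x : ℕ} (h : x ∈ v) : firstOcc v x < v.length :=
  List.idxOf_lt_length_of_mem h

theorem getD_firstOcc {v : List ℕ} {x : ℕ} (h : x ∈ v) : v.getD (firstOcc v x) 0 = x := by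
  rw [List.getD_eq_getElem _ _ (firstOcc_lt_length h)]
  exact List.getElem_idxOf _

theorem secondOcc_lt_length {v : List ℕ} {x : ℕ} (h : x ∈ v) : secondOcc v x < v.length := by
  have := List.length_pos_of_mem h
  unfold secondOcc; omega

theorem getD_secondOcc {v : List ℕ} {x : ℕ} (h : x ∈ v) : v.getD (secondOcc v x) 0 = x := by
  have hr : x ∈ v.reverse := List.mem_reverse.2 h
  have h1 := firstOcc_lt_length hr
  have h2 := getD_firstOcc hr
  rw [List.length_reverse] at h1
  rwa [List.getD_reverse _ h1] at h2

theorem firstOcc_lt_secondOcc {v : List ℕ} {x : ℕ} (h : 2 ≤ v.count x) :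
    firstOcc v x < secondOcc v x := by
  by_contra! hle
  have hsub : {k ∈ range v.length | v.getD k 0 = x} ⊆ {firstOcc v x} := by
    intro k hk
    rw [mem_filter, mem_range] at hk
    have := firstOcc_le hk.1 hk.2
    have := le_secondOcc hk.1 hk.2
    rw [mem_singleton]; omega
  have := card_le_card hsub
  rw [← count_eq_card_filter_getD, card_singleton] at this
  omega

theorem eq_firstOcc_or_eq_secondOcc {v : List ℕ} {x k : ℕ} (h : v.count x ≤ 2)
    (hk : k < v.length) (hkx : v.getD k 0 = x) : k = firstOcc v x ∨ k = secondOcc v x := by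
  have hx : x ∈ v := by rw [← hkx, List.getD_eq_getElem _ _ hk]; exact List.getElem_mem hk
  by_contra! hne
  have h1 := lt_of_le_of_ne (firstOcc_le hk hkx) hne.1.symm
  have h2 := lt_of_le_of_ne (le_secondOcc hk hkx) hne.2
  have hsub : {firstOcc v x, k, secondOcc v x} ⊆ {k ∈ range v.length | v.getD k 0 = x} := by
    intro i hi
    rw [mem_filter, mem_range]
    rcases mem_insert.1 hi with rfl | hi
    · exact ⟨firstOcc_lt_length hx, getD_firstOcc hx⟩
    rcases mem_insert.1 hi with rfl | hi
    · exact ⟨hk, hkx⟩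
    rw [mem_singleton.1 hi]
    exact ⟨secondOcc_lt_length hx, getD_secondOcc hx⟩
  have := card_le_card hsub
  rw [← count_eq_card_filter_getD,
    card_insert_of_notMem (by simp only [mem_insert, mem_singleton]; omega),
    card_pair (by omega)] at this
  omega

theorem firstOcc_getD_of_isFirstAt {v : List ℕ} {k : ℕ} (h : isFirstAt v k = true) :
    firstOcc v (v.getD k 0) = k := by
  simpa [isFirstAt, firstOcc] using h

def AgreeAfter (p : ℕ) (u v : List ℕ) : Prop := ∀ r, p < r → u.getD r 0 = v.getD r 0

theorem AgreeAfter.symm {p : ℕ} {u v : List ℕ} (h : AgreeAfter p u v) : AgreeAfter p v u :=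
  fun r hr => (h r hr).symm

theorem exists_agreeAfter_of_ne {u v : List ℕ} (hlen : u.length = v.length) (hne : u ≠ v) :
    ∃ p < u.length, u.getD p 0 ≠ v.getD p 0 ∧ AgreeAfter p u v := by
  have hex : ∃ p < u.length, u.getD p 0 ≠ v.getD p 0 := by
    by_contra! h
    exact hne (List.ext_getElem hlen fun i h1 h2 => by
      simpa [List.getD_eq_getElem, h1, h2] using h i h1)
  obtain ⟨m, hm, hPm⟩ := hex
  set p := Nat.findGreatest (fun p => u.getD p 0 ≠ v.getD p 0) u.length
  have hp : u.getD p 0 ≠ v.getD p 0 :=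
    Nat.findGreatest_spec (P := fun p => u.getD p 0 ≠ v.getD p 0) hm.le hPm
  have hpu : p < u.length := by
    by_contra! h
    exact hp (by rw [List.getD_eq_default _ _ h, List.getD_eq_default _ _ (hlen ▸ h)])
  refine ⟨p, hpu, hp, fun q hq => ?_⟩
  by_cases hqu : q ≤ u.length
  · exact not_not.1 (Nat.findGreatest_is_greatest hq hqu)
  · rw [List.getD_eq_default _ _ (by omega), List.getD_eq_default _ _ (by omega)]

def vertexAt (n : ℕ) (v : List ℕ) (k : ℕ) : ℕ :=
  if isFirstAt v k then n + v.getD k 0 else v.getD k 0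

def partnerVertex (n x : ℕ) : ℕ := if x ≤ n then n + x + 1 else x

namespace IsTreeRep

variable {n : ℕ} {u v : List ℕ}

theorem getD_mem_Icc (hv : IsTreeRep n v) {k : ℕ} (hk : k < 2 * n) :
    v.getD k 0 ∈ Set.Icc 1 n :=
  hv.2.1 _ (by rw [List.getD_eq_getElem _ _ (hv.1 ▸ hk)]; exact List.getElem_mem _)

theorem mem (hv : IsTreeRep n v) {x : ℕ} (h1 : 1 ≤ x) (h2 : x ≤ n) : x ∈ v :=
  List.count_pos_iff.1 (by rw [hv.2.2.1 x h1 h2]; omega)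

theorem secondOcc_getD (hv : IsTreeRep n v) {k : ℕ} (hk : k < 2 * n)
    (h : isFirstAt v k = false) : secondOcc v (v.getD k 0) = k := by
  obtain ⟨hx1, hxn⟩ := hv.getD_mem_Icc hk
  refine ((eq_firstOcc_or_eq_secondOcc (hv.2.2.1 _ hx1 hxn).le (hv.1 ▸ hk) rfl).resolve_left
    fun hfirst => ?_).symm
  unfold isFirstAt at h
  change (firstOcc v (v.getD k 0) == k) = false at h
  rw [← hfirst] at h
  simp at h

theorem isFirstAt_secondOcc (hv : IsTreeRep n v) {x : ℕ} (h1 : 1 ≤ x) (h2 : x ≤ n) :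
    isFirstAt v (secondOcc v x) = false := by
  by_contra hfirst
  have := firstOcc_getD_of_isFirstAt (Bool.not_eq_false _ ▸ hfirst)
  rw [getD_secondOcc (hv.mem h1 h2)] at this
  have := firstOcc_lt_secondOcc (v := v) (x := x) (hv.2.2.1 x h1 h2).ge
  omega

theorem isFirstAt_iff (hv : IsTreeRep n v) {k : ℕ} (hk : k < 2 * n) :
    isFirstAt v k = true ↔ ∃ r, k < r ∧ r < 2 * n ∧ v.getD r 0 = v.getD k 0 := by
  obtain ⟨hx1, hxn⟩ := hv.getD_mem_Icc hk
  have hmem := hv.mem hx1 hxn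
  constructor
  · intro h
    refine ⟨secondOcc v (v.getD k 0), ?_, hv.1 ▸ secondOcc_lt_length hmem,
      getD_secondOcc hmem⟩
    have := firstOcc_lt_secondOcc (hv.2.2.1 _ hx1 hxn).ge
    rwa [firstOcc_getD_of_isFirstAt h] at this
  · rintro ⟨r, hkr, hr, hrk⟩
    by_contra h
    have := le_secondOcc (hv.1 ▸ hr) hrk
    rw [hv.secondOcc_getD hk (Bool.not_eq_true _ ▸ h)] at this
    omega

theorem secondOcc_strictMonoOn (hv : IsTreeRep n v) :
    StrictMonoOn (secondOcc v) (Set.Icc 1 n) :=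
  strictMonoOn_of_lt_add_one Set.ordConnected_Icc fun a _ ha ha1 => by
    obtain ⟨-, -, -, -, -, hsecond_lt⟩ := hv
    simpa only [Nat.add_sub_cancel] using hsecond_lt (a + 1) (Nat.succ_le_succ ha.1) ha1.2

theorem secondOcc_top (hv : IsTreeRep n v) (hn : 1 ≤ n) : secondOcc v n = 2 * n - 1 := by
  have hlen := hv.1
  have hlast := hv.getD_mem_Icc (k := 2 * n - 1) (by omega)
  have hle := le_secondOcc (v := v) (by omega : 2 * n - 1 < v.length) rfl
  have hmono := hv.secondOcc_strictMonoOn.monotoneOn hlast ⟨hn, le_rfl⟩ hlast.2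
  have := secondOcc_lt_length (hv.mem hn le_rfl)
  omega

theorem getD_last (hv : IsTreeRep n v) (hn : 1 ≤ n) : v.getD (2 * n - 1) 0 = n := by
  rw [← hv.secondOcc_top hn, getD_secondOcc (hv.mem hn le_rfl)]

theorem secondOcc_succ_le (hv : IsTreeRep n v) {c k : ℕ} (hc : 1 ≤ c) (hcn : c ≤ n)
    (hk : k < 2 * n) (hkf : isFirstAt v k = false) (hck : secondOcc v c < k) :
    c + 1 ≤ n ∧ secondOcc v (c + 1) ≤ k := by
  have hd := hv.getD_mem_Icc hk
  have hsd := hv.secondOcc_getD hk hkf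
  have hcd : c < v.getD k 0 := by
    by_contra! hdc
    have := hv.secondOcc_strictMonoOn.monotoneOn hd ⟨hc, hcn⟩ hdc
    omega
  refine ⟨hcd.trans_le hd.2, ?_⟩
  rw [← hsd]
  exact hv.secondOcc_strictMonoOn.monotoneOn ⟨by omega, hcd.trans_le hd.2⟩ hd hcd

theorem sInf_second_after_eq_secondOcc_succ (hv : IsTreeRep n v) {c j : ℕ} (hc : 1 ≤ c)
    (hcn : c < n) (hj : secondOcc v c = j) (hj1 : isFirstAt v (j + 1) = true) :
    sInf {k | j + 1 < k ∧ k < v.length ∧ isFirstAt v k = false} = secondOcc v (c + 1) := by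
  have hlt : j < secondOcc v (c + 1) :=
    hj ▸ hv.secondOcc_strictMonoOn ⟨hc, hcn.le⟩ ⟨by omega, hcn⟩ (by omega)
  have hsecond := hv.isFirstAt_secondOcc (x := c + 1) (by omega) hcn
  have hmem :
      secondOcc v (c + 1) ∈ {k | j + 1 < k ∧ k < v.length ∧ isFirstAt v k = false} := by
    refine ⟨lt_of_le_of_ne hlt fun h => ?_, secondOcc_lt_length (hv.mem (by omega) hcn),
      hsecond⟩
    rw [← h, hj1] at hsecond
    exact Bool.noConfusion hsecond
  refine le_antisymm (Nat.sInf_le hmem) (le_csInf ⟨_, hmem⟩ ?_)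
  rintro k ⟨hjk, hk, hkf⟩
  exact (hv.secondOcc_succ_le hc hcn.le (hv.1 ▸ hk) hkf (by omega)).2

theorem decodeEdge_eq (hv : IsTreeRep n v) {j : ℕ} (hj : j < 2 * n - 1) :
    decodeEdge n v j = s(partnerVertex n (vertexAt n v j), vertexAt n v (j + 1)) := by
  obtain ⟨ha1, han⟩ := hv.getD_mem_Icc (k := j) (by omega)
  obtain ⟨hb1, hbn⟩ := hv.getD_mem_Icc (k := j + 1) (by omega)
  unfold decodeEdge vertexAt partnerVertex
  cases hfj : isFirstAt v j <;> cases hfj1 : isFirstAt v (j + 1) <;>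
    simp only [Bool.false_eq_true, if_true, if_false]
  · have hsa := hv.secondOcc_getD (by omega) hfj
    have hsucc := hv.secondOcc_succ_le ha1 han (k := j + 1) (by omega) hfj1 (by omega)
    have hgt := hv.secondOcc_strictMonoOn ⟨ha1, han⟩ ⟨by omega, hsucc.1⟩ (lt_add_one _)
    have hba : v.getD (j + 1) 0 = v.getD j 0 + 1 :=
      hv.secondOcc_strictMonoOn.injOn ⟨hb1, hbn⟩ ⟨by omega, hsucc.1⟩
        (by rw [hv.secondOcc_getD (by omega) hfj1]; omega)
    rw [if_pos han, hba, Nat.add_assoc]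
  · have hsa := hv.secondOcc_getD (by omega) hfj
    have hlt : v.getD j 0 < n := by
      refine lt_of_le_of_ne han fun h => ?_
      rw [h, hv.secondOcc_top (by omega)] at hsa
      omega
    rw [hv.sInf_second_after_eq_secondOcc_succ ha1 hlt hsa hfj1,
      getD_secondOcc (hv.mem (by omega) hlt), if_pos han, Nat.add_assoc]
  · rw [if_neg (by omega)]
  · rw [if_neg (by omega)]

theorem isFirstAt_iff_lt_vertexAt (hv : IsTreeRep n v) {k : ℕ} (hk : k < 2 * n) :
    isFirstAt v k = true ↔ n < vertexAt n v k := by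
  obtain ⟨hx1, hxn⟩ := hv.getD_mem_Icc hk
  unfold vertexAt
  cases isFirstAt v k <;>
    simp only [Bool.false_eq_true, if_true, if_false, false_iff, true_iff, not_lt] <;> omega

theorem vertexAt_injOn (hv : IsTreeRep n v) : Set.InjOn (vertexAt n v) (Set.Iio (2 * n)) := by
  intro k hk k' hk' h
  obtain ⟨hx1, hxn⟩ := hv.getD_mem_Icc hk
  obtain ⟨hy1, hyn⟩ := hv.getD_mem_Icc hk'
  unfold vertexAt at h
  cases hf : isFirstAt v k <;> cases hf' : isFirstAt v k' <;> rw [hf, hf'] at h <;>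
    simp only [Bool.false_eq_true, if_true, if_false] at h
  · rw [← hv.secondOcc_getD hk hf, ← hv.secondOcc_getD hk' hf', h]
  · omega
  · omega
  · rw [← firstOcc_getD_of_isFirstAt hf, ← firstOcc_getD_of_isFirstAt hf',
      Nat.add_left_cancel h]

theorem lt_secondOcc_of_vertexAt_eq (hv : IsTreeRep n v) {m c : ℕ} (hm : m < 2 * n)
    (hc : 1 ≤ c) (h : vertexAt n v m = n + c + 1) : m < secondOcc v c := by
  obtain ⟨hx1, hxn⟩ := hv.getD_mem_Icc hm
  have hf := (hv.isFirstAt_iff_lt_vertexAt hm).2 (by omega)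
  simp only [vertexAt, hf, if_true] at h
  have hfirst := firstOcc_getD_of_isFirstAt hf
  rw [show v.getD m 0 = c + 1 by omega] at hfirst
  obtain ⟨-, -, -, -, hfirst_lt, -⟩ := hv
  have := hfirst_lt (c + 1) (by omega) (by omega)
  rwa [hfirst, Nat.add_sub_cancel] at this

/-- A second occurrence of `c` is never followed by the first occurrence of `c + 1`. -/
theorem vertexAt_ne_partnerVertex_of_lt (hv : IsTreeRep n v) {k m : ℕ} (hkm : k < m)
    (hm : m < 2 * n) : vertexAt n v m ≠ partnerVertex n (vertexAt n v k) := by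
  intro h
  unfold partnerVertex at h
  split_ifs at h with hle
  · have hf := (hv.isFirstAt_iff_lt_vertexAt (k := k) (by omega)).not.2 (by omega)
    have hx1 := (hv.getD_mem_Icc (k := k) (by omega)).1
    have hck : vertexAt n v k = v.getD k 0 := by simp [vertexAt, hf]
    have := hv.lt_secondOcc_of_vertexAt_eq hm (by omega) h
    rw [hck, hv.secondOcc_getD (by omega) (by simpa using hf)] at this
    omega
  · exact hkm.ne' (hv.vertexAt_injOn hm (Set.mem_Iio.2 (by omega)) h)

theorem exists_lt_vertexAt_eq (hv : IsTreeRep n v) {p c : ℕ} (hp : p < 2 * n)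
    (hc : 1 ≤ c) (h : vertexAt n v p = n + c + 1) :
    ∃ m, p < m ∧ m < 2 * n ∧ vertexAt n v m = c := by
  obtain ⟨hx1, hxn⟩ := hv.getD_mem_Icc hp
  have hcn : c ≤ n := by unfold vertexAt at h; split_ifs at h <;> omega
  refine ⟨secondOcc v c, hv.lt_secondOcc_of_vertexAt_eq hp hc h,
    hv.1 ▸ secondOcc_lt_length (hv.mem hc hcn), ?_⟩
  simp only [vertexAt, hv.isFirstAt_secondOcc hc hcn, Bool.false_eq_true, if_false]
  exact getD_secondOcc (hv.mem hc hcn)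

theorem vertexAt_ne_of_getD_ne (hu : IsTreeRep n u) (hv : IsTreeRep n v) {p : ℕ}
    (hp : p < 2 * n) (h : u.getD p 0 ≠ v.getD p 0) : vertexAt n u p ≠ vertexAt n v p := by
  obtain ⟨hx1, hxn⟩ := hu.getD_mem_Icc hp
  obtain ⟨hy1, hyn⟩ := hv.getD_mem_Icc hp
  unfold vertexAt
  cases isFirstAt u p <;> cases isFirstAt v p <;>
    simp only [Bool.false_eq_true, if_true, if_false] <;> omega

theorem isFirstAt_eq_of_agreeAfter (hu : IsTreeRep n u) (hv : IsTreeRep n v) {p q : ℕ}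
    (hagree : AgreeAfter p u v) (hpq : p < q) (hq : q < 2 * n) :
    isFirstAt u q = isFirstAt v q := by
  rw [Bool.eq_iff_iff, hu.isFirstAt_iff hq, hv.isFirstAt_iff hq]
  refine exists_congr fun r => and_congr_right fun hqr => and_congr_right fun _ => ?_
  rw [hagree r (by omega), hagree q hpq]

theorem vertexAt_eq_of_agreeAfter (hu : IsTreeRep n u) (hv : IsTreeRep n v) {p q : ℕ}
    (hagree : AgreeAfter p u v) (hpq : p < q) (hq : q < 2 * n) :
    vertexAt n u q = vertexAt n v q := by
  rw [vertexAt, vertexAt, isFirstAt_eq_of_agreeAfter hu hv hagree hpq hq, hagree q hpq]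

theorem vertexAt_ne_partnerVertex_of_agreeAfter (hu : IsTreeRep n u) (hv : IsTreeRep n v)
    {p : ℕ} (hagree : AgreeAfter p u v) (hp : p < 2 * n) (hle : vertexAt n u p ≤ n) :
    vertexAt n v p ≠ partnerVertex n (vertexAt n u p) := by
  intro h
  rw [partnerVertex, if_pos hle] at h
  have hx := hu.getD_mem_Icc hp
  have hf := (hu.isFirstAt_iff_lt_vertexAt hp).not.2 (by omega)
  have hpos : 1 ≤ vertexAt n u p := by
    rw [Bool.not_eq_true] at hf
    simpa only [vertexAt, hf, Bool.false_eq_true, if_false] using hx.1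
  obtain ⟨m, hpm, hm, hvm⟩ := hv.exists_lt_vertexAt_eq hp hpos h
  rw [← vertexAt_eq_of_agreeAfter hu hv hagree hpm hm] at hvm
  exact hpm.ne (hu.vertexAt_injOn hp hm hvm.symm)

theorem partnerVertex_ne_of_agreeAfter (hu : IsTreeRep n u) (hv : IsTreeRep n v) {p : ℕ}
    (hagree : AgreeAfter p u v) (hp : p < 2 * n) (hne : vertexAt n u p ≠ vertexAt n v p) :
    partnerVertex n (vertexAt n u p) ≠ partnerVertex n (vertexAt n v p) := by
  intro h
  unfold partnerVertex at h
  split_ifs at h with hu' hv' hv'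
  · exact hne (by omega)
  · exact vertexAt_ne_partnerVertex_of_agreeAfter hu hv hagree hp hu'
      (by rw [partnerVertex, if_pos hu', h])
  · exact vertexAt_ne_partnerVertex_of_agreeAfter hv hu hagree.symm hp hv'
      (by rw [partnerVertex, if_pos hv', h])
  · exact hne h

theorem decodeEdge_notMem_of_agreeAfter (hu : IsTreeRep n u) (hv : IsTreeRep n v) {p : ℕ}
    (hagree : AgreeAfter p u v) (hp : p < 2 * n - 1)
    (hpart : partnerVertex n (vertexAt n u p) ≠ partnerVertex n (vertexAt n v p)) :
    decodeEdge n v p ∉ decodeEdges n u := by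
  intro hmem
  obtain ⟨j, hj, hedge⟩ := mem_image.1 hmem
  rw [mem_range] at hj
  rw [hu.decodeEdge_eq hj, hv.decodeEdge_eq hp, Sym2.eq_iff] at hedge
  have hnext := vertexAt_eq_of_agreeAfter hu hv hagree (lt_add_one p) (by omega)
  rcases hedge with ⟨hpartner, hsucc⟩ | ⟨hpartner, hsucc⟩
  · have hjp : j + 1 = p + 1 := hu.vertexAt_injOn (Set.mem_Iio.2 (by omega))
      (Set.mem_Iio.2 (by omega)) (hsucc.trans hnext.symm)
    exact hpart (Nat.add_right_cancel hjp ▸ hpartner)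
  · have hpj : p + 1 ≤ j := by
      by_contra! hjp
      exact hu.vertexAt_ne_partnerVertex_of_lt hjp (by omega) (hnext.trans hpartner.symm)
    rw [vertexAt_eq_of_agreeAfter hu hv hagree (by omega) (by omega)] at hsucc
    exact hv.vertexAt_ne_partnerVertex_of_lt (by omega) (by omega) hsucc

end IsTreeRep

theorem stmt17_general (n : ℕ) (u v : List ℕ)
    (hu : IsTreeRep n u) (hv : IsTreeRep n v) (hne : u ≠ v) :
    decodeEdges n u ≠ decodeEdges n v := by
  intro hEq
  obtain ⟨p, hp, hdiff, hagree⟩ := exists_agreeAfter_of_ne (hu.1.trans hv.1.symm) hne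
  rw [hu.1] at hp
  have hp' : p < 2 * n - 1 := by
    refine lt_of_le_of_ne (by omega) fun hlast => hdiff ?_
    rw [hlast, hu.getD_last (by omega), hv.getD_last (by omega)]
  have hpart := hu.partnerVertex_ne_of_agreeAfter hv hagree hp
    (hu.vertexAt_ne_of_getD_ne hv hp hdiff)
  exact hu.decodeEdge_notMem_of_agreeAfter hv hagree hp' hpart
    (hEq ▸ mem_image_of_mem _ (mem_range.2 hp'))

/-- For `n ≥ 2`, the decoding map is injective on tree representations on
`{1,…,n}`: distinct tree representations produce graphs with different edge
sets. -/
theorem stmt17 (n : ℕ) (hn : 2 ≤ n) (u v : List ℕ)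
    (hu : IsTreeRep n u) (hv : IsTreeRep n v) (hne : u ≠ v) :
    decodeEdges n u ≠ decodeEdges n v :=
  stmt17_general n u v hu hv hne
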